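/- arXiv:2006.11429 — 2 statements merged into one kernel-verified Lean document; each statement's English description precedes it below -/
import Mathlib

section
/- Let 1 < α < 2. Then the integral ∫_0^π dp / (∑_{n=1}^∞ (1 − cos(n·p))·n^{−α}) is finite, i.e., the function p ↦ (∑_{n=1}^∞ (1 − cos(np)) n^{−α})^{−1} is integrable on (0, π]. -/
/-!
On `(0, 1]` the terms with `n ∈ (⌊1/p⌋, 2⌊1/p⌋]` satisfy `1 ≤ np ≤ 2`, so each of these roughly
`1/p` terms has `1 - cos (np) ≥ 2/π²` and `n^{-α} ≥ (p/2)^α`; hence `R(p) ≳ p^{α-1}` and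
`R(p)⁻¹ ≲ p^{1-α}`, which is integrable at `0` because `α < 2`. On `[1, π]` the series is
continuous and bounded below by its first term `1 - cos p > 0`.
-/

open Real MeasureTheory Set

/-- The function `R(p)` of the paper. -/
noncomputable def oneSubCosSeries (α p : ℝ) : ℝ :=
  ∑' n : ℕ, (1 - cos (n * p)) * (n : ℝ) ^ (-α)

section

variable {α p : ℝ}

lemma one_sub_cos_mul_rpow_nonneg (α p : ℝ) (n : ℕ) :
    0 ≤ (1 - cos (n * p)) * (n : ℝ) ^ (-α) :=
  mul_nonneg (sub_nonneg.2 (cos_le_one _)) (rpow_nonneg n.cast_nonneg _)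

lemma one_sub_cos_mul_rpow_le (α p : ℝ) (n : ℕ) :
    (1 - cos (n * p)) * (n : ℝ) ^ (-α) ≤ 2 * (n : ℝ) ^ (-α) :=
  mul_le_mul_of_nonneg_right (by linarith [neg_one_le_cos (n * p)]) (rpow_nonneg n.cast_nonneg _)

lemma summable_two_mul_rpow_neg (hα : 1 < α) : Summable fun n : ℕ => 2 * (n : ℝ) ^ (-α) :=
  (summable_nat_rpow.2 (by linarith)).mul_left 2

lemma summable_one_sub_cos_mul_rpow (hα : 1 < α) (p : ℝ) :
    Summable fun n : ℕ => (1 - cos (n * p)) * (n : ℝ) ^ (-α) :=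
  (summable_two_mul_rpow_neg hα).of_nonneg_of_le (one_sub_cos_mul_rpow_nonneg α p)
    (one_sub_cos_mul_rpow_le α p)

lemma continuous_oneSubCosSeries (hα : 1 < α) : Continuous (oneSubCosSeries α) :=
  continuous_tsum (fun _ => by fun_prop) (summable_two_mul_rpow_neg hα) fun n p => by
    rw [norm_of_nonneg (one_sub_cos_mul_rpow_nonneg α p n)]
    exact one_sub_cos_mul_rpow_le α p n

lemma sum_le_oneSubCosSeries (hα : 1 < α) (p : ℝ) (s : Finset ℕ) :
    ∑ n ∈ s, (1 - cos (n * p)) * (n : ℝ) ^ (-α) ≤ oneSubCosSeries α p :=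
  (summable_one_sub_cos_mul_rpow hα p).sum_le_tsum s fun n _ => one_sub_cos_mul_rpow_nonneg α p n

lemma oneSubCosSeries_pos (hα : 1 < α) (hp0 : 0 < p) (hpπ : p ≤ π) :
    0 < oneSubCosSeries α p := by
  have hfirst : 1 - cos p ≤ oneSubCosSeries α p := by
    simpa using sum_le_oneSubCosSeries hα p {1}
  have hcos := cos_le_one_sub_mul_cos_sq (abs_le.2 ⟨by linarith [pi_pos], hpπ⟩)
  have : 0 < 2 / π ^ 2 * p ^ 2 := by positivity
  linarith

lemma rpow_le_one_sub_cos_mul_rpow (hα : 0 ≤ α) (hp : 0 < p) {n : ℕ} (h1 : 1 ≤ n * p)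
    (h2 : n * p ≤ 2) : 2 / π ^ 2 * (p / 2) ^ α ≤ (1 - cos (n * p)) * (n : ℝ) ^ (-α) := by
  have hn : 0 < (n : ℝ) := pos_of_mul_pos_left (one_pos.trans_le h1) hp.le
  have hcos : 2 / π ^ 2 ≤ 1 - cos (n * p) := by
    have := cos_le_one_sub_mul_cos_sq (abs_le.2 ⟨by nlinarith [pi_pos], h2.trans two_le_pi⟩)
    have : 2 / π ^ 2 ≤ 2 / π ^ 2 * (n * p) ^ 2 :=
      le_mul_of_one_le_right (by positivity) (one_le_pow₀ h1)
    linarith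
  have hpow : (p / 2) ^ α ≤ (n : ℝ) ^ (-α) := by
    rw [rpow_neg hn.le, ← inv_rpow hn.le]
    refine rpow_le_rpow (by positivity) ?_ hα
    rw [le_inv_comm₀ (by positivity) hn, inv_div, le_div_iff₀ hp]
    exact h2
  exact mul_le_mul hcos hpow (by positivity) (sub_nonneg.2 (cos_le_one _))

lemma rpow_sub_one_le_mul_oneSubCosSeries (hα : 1 < α) (hp0 : 0 < p) (hp1 : p ≤ 1) :
    p ^ (α - 1) ≤ 2 ^ α * π ^ 2 * oneSubCosSeries α p := by
  set N := ⌊p⁻¹⌋₊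
  have hN : p⁻¹ < N + 1 := Nat.lt_floor_add_one _
  have hN1 : (1 : ℝ) ≤ N := by
    exact_mod_cast Nat.one_le_floor_iff _ |>.2 (one_le_inv₀ hp0 |>.2 hp1)
  have hterm : ∀ n ∈ Finset.Ioc N (2 * N),
      2 / π ^ 2 * (p / 2) ^ α ≤ (1 - cos (n * p)) * (n : ℝ) ^ (-α) := by
    intro n hn
    obtain ⟨hlo, hhi⟩ := Finset.mem_Ioc.1 hn
    have hlo' : (N : ℝ) + 1 ≤ n := by exact_mod_cast hlo
    have hhi' : (n : ℝ) ≤ 2 * N := by exact_mod_cast hhi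
    have hNp : (N : ℝ) * p ≤ 1 := by
      simpa [hp0.ne'] using mul_le_mul_of_nonneg_right (Nat.floor_le (inv_nonneg.2 hp0.le)) hp0.le
    refine rpow_le_one_sub_cos_mul_rpow (by linarith) hp0 ?_ (by nlinarith)
    rw [← inv_le_iff_one_le_mul₀ hp0]
    linarith
  have hblock := (Finset.card_nsmul_le_sum _ _ _ hterm).trans (sum_le_oneSubCosSeries hα p _)
  rw [Nat.card_Ioc, two_mul, Nat.add_sub_cancel, nsmul_eq_mul] at hblock
  calc p ^ (α - 1) = p⁻¹ * p ^ α := by rw [rpow_sub_one hp0.ne']; ring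
    _ ≤ 2 * N * p ^ α := by gcongr; linarith
    _ = 2 ^ α * π ^ 2 * (N * (2 / π ^ 2 * (p / 2) ^ α)) := by
      rw [div_rpow hp0.le zero_le_two]; field_simp
    _ ≤ 2 ^ α * π ^ 2 * oneSubCosSeries α p := by gcongr

lemma integrableOn_inv_oneSubCosSeries_Ioc_zero_one (hα1 : 1 < α) (hα2 : α < 2) :
    IntegrableOn (fun p => (oneSubCosSeries α p)⁻¹) (Ioc 0 1) := by
  have hdom : IntegrableOn (fun p : ℝ => 2 ^ α * π ^ 2 * p ^ (1 - α)) (Ioc 0 1) :=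
    ((intervalIntegrable_iff_integrableOn_Ioc_of_le zero_le_one).1
      (intervalIntegral.intervalIntegrable_rpow' (by linarith))).const_mul _
  refine hdom.mono' (continuous_oneSubCosSeries hα1).measurable.inv.aestronglyMeasurable ?_
  refine (ae_restrict_iff' measurableSet_Ioc).2 (ae_of_all _ fun p ⟨hp0, hp1⟩ => ?_)
  have hR := oneSubCosSeries_pos hα1 hp0 (hp1.trans (by linarith [pi_gt_three]))
  rw [norm_inv, norm_of_nonneg hR.le, ← neg_sub, rpow_neg hp0.le,
    inv_le_comm₀ hR (by positivity), mul_inv, inv_inv, inv_mul_le_iff₀ (by positivity)]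
  exact rpow_sub_one_le_mul_oneSubCosSeries hα1 hp0 hp1

lemma integrableOn_inv_oneSubCosSeries_Icc (hα : 1 < α) {a b : ℝ} (ha : 0 < a) (hb : b ≤ π) :
    IntegrableOn (fun p => (oneSubCosSeries α p)⁻¹) (Icc a b) :=
  ((continuous_oneSubCosSeries hα).continuousOn.inv₀ fun _ hp =>
    (oneSubCosSeries_pos hα (ha.trans_le hp.1) (hp.2.trans hb)).ne').integrableOn_Icc

end

/-- For `1 < α < 2` the function `p ↦ (∑_{n=1}^∞ (1 − cos(np)) n^{−α})⁻¹` is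
integrable on `(0, π]`, i.e. `∫_0^π dp / R(p) < ∞`.
(The `n = 0` term of the sum below vanishes, so the sum over `ℕ` is the sum
over `n ≥ 1`.) -/
theorem inverse_R_integrable (α : ℝ) (hα1 : 1 < α) (hα2 : α < 2) :
    MeasureTheory.IntegrableOn
      (fun p : ℝ => (∑' n : ℕ, (1 - Real.cos (n * p)) * (n : ℝ) ^ (-α))⁻¹)
      (Set.Ioc 0 Real.pi) MeasureTheory.volume := by
  change IntegrableOn (fun p => (oneSubCosSeries α p)⁻¹) (Ioc 0 π)
  rw [← Ioc_union_Ioc_eq_Ioc zero_le_one (by linarith [pi_gt_three])]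
  exact (integrableOn_inv_oneSubCosSeries_Ioc_zero_one hα1 hα2).union
    ((integrableOn_inv_oneSubCosSeries_Icc hα1 one_pos le_rfl).mono_set Ioc_subset_Icc_self)
end

section
/- Fix 1 < α < 2 and γ ≥ ε > 0. For an integer m ≥ 1 let Λ = {1−m, …, m} ⊆ ℤ (a periodic lattice of 2m sites, indices taken mod 2m). For j, k ∈ Λ set J_{j,k} = ∑_{n∈ℤ} |j − k + 2mn|^{−α} if j ≢ k (mod 2m) and J_{j,j} = 0; set N_{j,k} = 1 if j − k ≡ ±1 (mod 2m) and 0 otherwise; and set K_{j,k} = (γ−ε)·N_{j,k} + ε·J_{j,k}. Define H(σ) = (1/2)·∑_{j,k∈Λ} K_{j,k}·(σ_j − σ_k)² for σ ∈ {−1,1}^Λ and the Gibbs expectation ⟨f⟩ = (∑_σ f(σ)e^{−H(σ)})/(∑_σ e^{−H(σ)}). Let Λ* = {kπ/m : k = 0,1,…,2m−1}, and for p ∈ Λ* set g_m(p) = (1/(2m))·∑_{j,k∈Λ} cos(p(j−k))·⟨σ_jσ_k⟩ and E(p) = (1/2)·∑_{j∈Λ} K_{j,0}·(1 − cos(pj)).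 Suppose Gaussian domination holds, i.e., Z(h) ≤ Z(0) for all h : Λ → ℝ, where Z(h) = ∑_{σ ∈ {−1,1}^Λ} exp(−(1/2)·∑_{j,k∈Λ} K_{j,k}·(σ_j − σ_k − h_j + h_k)²). Then for every p ∈ Λ* with p ≠ 0: g_m(p) ≤ 1/(2·E(p)) (the infrared bound). -/
/-- The periodic lattice `Λ = {1−m, …, m}` of `2m` sites, as a type. -/
abbrev Site (m : ℕ) : Type := Finset.Icc (1 - (m : ℤ)) (m : ℤ)

/-- Ising spin configurations `{−1,1}^Λ`. -/
abbrev Spin (m : ℕ) : Type := Site m → ({-1, 1} : Finset ℝ)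

/-- Periodized power-law coupling `J_{j,k} = ∑_{n∈ℤ} |j−k+2mn|^{−α}` for
`j ≢ k (mod 2m)`, and `0` for `j ≡ k (mod 2m)`. -/
noncomputable def Jc (α : ℝ) (m : ℕ) (j k : ℤ) : ℝ :=
  if (2 * (m : ℤ)) ∣ (j - k) then 0
  else ∑' n : ℤ, |(j : ℝ) - (k : ℝ) + 2 * (m : ℝ) * (n : ℝ)| ^ (-α)

/-- Periodic nearest-neighbor indicator: `1` if `j − k ≡ ±1 (mod 2m)`. -/
noncomputable def Nc (m : ℕ) (j k : ℤ) : ℝ :=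
  if (2 * (m : ℤ)) ∣ (j - k - 1) ∨ (2 * (m : ℤ)) ∣ (j - k + 1) then 1 else 0

/-- Total coupling `K_{j,k} = (γ−ε)·N_{j,k} + ε·J_{j,k}`. -/
noncomputable def Kc (α γ ε : ℝ) (m : ℕ) (j k : ℤ) : ℝ :=
  (γ - ε) * Nc m j k + ε * Jc α m j k

/-- The Gaussian-domination partition function
`Z(h) = ∑_{σ∈{−1,1}^Λ} exp(−(1/2)∑_{j,k∈Λ} K_{j,k}(σ_j − σ_k − h_j + h_k)²)`.
Only the values of `h` on `Λ` are used. -/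
noncomputable def Zf (α γ ε : ℝ) (m : ℕ) (h : ℤ → ℝ) : ℝ :=
  ∑ σ : Spin m, Real.exp (-(1 / 2) * ∑ j : Site m, ∑ k : Site m,
    Kc α γ ε m (j : ℤ) (k : ℤ) *
      ((σ j : ℝ) - (σ k : ℝ) - h (j : ℤ) + h (k : ℤ)) ^ 2)


/-- The Hamiltonian `H(σ) = (1/2)·∑_{j,k∈Λ} K_{j,k}(σ_j − σ_k)²`. -/
noncomputable def Hc (α γ ε : ℝ) (m : ℕ) (σ : Spin m) : ℝ :=
  (1 / 2) * ∑ j : Site m, ∑ k : Site m,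
    Kc α γ ε m (j : ℤ) (k : ℤ) * ((σ j : ℝ) - (σ k : ℝ)) ^ 2

/-- The Gibbs two-point function
`⟨σ_j σ_k⟩ = (∑_σ σ_j σ_k e^{−H(σ)})/(∑_σ e^{−H(σ)})`. -/
noncomputable def corr (α γ ε : ℝ) (m : ℕ) (j k : Site m) : ℝ :=
  (∑ σ : Spin m, (σ j : ℝ) * (σ k : ℝ) * Real.exp (-Hc α γ ε m σ)) /
    ∑ σ : Spin m, Real.exp (-Hc α γ ε m σ)

/-- `g_m(p) = (1/(2m))·∑_{j,k∈Λ} cos(p(j−k))·⟨σ_jσ_k⟩`. -/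
noncomputable def gm (α γ ε : ℝ) (m : ℕ) (p : ℝ) : ℝ :=
  (1 / (2 * (m : ℝ))) * ∑ j : Site m, ∑ k : Site m,
    Real.cos (p * (((j : ℤ) - (k : ℤ) : ℤ) : ℝ)) * corr α γ ε m j k

/-- `E(p) = (1/2)·∑_{j∈Λ} K_{j,0}·(1 − cos(pj))`. -/
noncomputable def Ep (α γ ε : ℝ) (m : ℕ) (p : ℝ) : ℝ :=
  (1 / 2) * ∑ j : Site m, Kc α γ ε m (j : ℤ) 0 * (1 - Real.cos (p * ((j : ℤ) : ℝ)))

/-!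
Gaussian domination says that `δ ↦ Z(δ v)` is maximal at `δ = 0` for every `v`; comparing
second-order terms gives the Gibbs bound `⟨𝓔(σ, v)²⟩ ≤ 𝓔(v, v)`, where `𝓔` is the Dirichlet form
of the coupling `K`. Since `K` is translation invariant, the spin waves `cos (p ·)` and `sin (p ·)`,
`p ∈ Λ*`, are eigenvectors of the lattice Laplacian with eigenvalue `2 E(p)`, so
`𝓔(σ, v) = 4 E(p) ∑ⱼ σⱼ vⱼ` and `𝓔(v, v) = 4 E(p) ∑ⱼ vⱼ²`. Adding the bounds for the two waves gives
`16 E(p)² · 2m g_m(p) ≤ 8m E(p)`, and `E(p) > 0` for `p ≠ 0`.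
-/

open Finset Function Filter Topology Real

theorem two_add_sq_le_exp_add_exp_neg (x : ℝ) : 2 + x ^ 2 ≤ exp x + exp (-x) := by
  have hcosh : exp x + exp (-x) = 2 + 4 * sinh (x / 2) ^ 2 := by
    have h := cosh_two_mul (x / 2)
    rw [mul_div_cancel₀ x two_ne_zero, cosh_sq, cosh_eq] at h
    linarith
  have hsinh : (x / 2) ^ 2 ≤ sinh (x / 2) ^ 2 := by
    rw [← sq_abs, ← sq_abs (sinh _), abs_sinh]
    exact pow_le_pow_left₀ (abs_nonneg _) (self_le_sinh_iff.mpr (abs_nonneg _)) 2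
  linarith

theorem exp_le_one_add_mul_exp (y : ℝ) : exp y ≤ 1 + y * exp y := by
  have h := mul_le_mul_of_nonneg_left (add_one_le_exp (-y)) (exp_pos y).le
  rw [← exp_add, add_neg_cancel, exp_zero] at h
  linarith

section GaussianDomination

variable {ι : Type*} [Fintype ι] (H A : ι → ℝ) (C : ℝ)

theorem sum_sq_mul_exp_le_mul_exp_of_forall_sum_exp_le
    (hGD : ∀ δ : ℝ, ∑ i, exp (-H i + δ * A i - δ ^ 2 / 2 * C) ≤ ∑ i, exp (-H i))
    {δ : ℝ} (hδ : δ ≠ 0) :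
    ∑ i, A i ^ 2 * exp (-H i) ≤ C * (∑ i, exp (-H i)) * exp (δ ^ 2 / 2 * C) := by
  set Z := ∑ i, exp (-H i)
  set y := δ ^ 2 / 2 * C
  -- symmetrising in `δ` turns the exponential tilt into a `cosh`, which is at least quadratic
  have hsym : exp (-y) * (2 * Z + δ ^ 2 * ∑ i, A i ^ 2 * exp (-H i)) ≤ 2 * Z := by
    calc exp (-y) * (2 * Z + δ ^ 2 * ∑ i, A i ^ 2 * exp (-H i))
        = ∑ i, exp (-y) * exp (-H i) * (2 + (δ * A i) ^ 2) := by
          simp only [Z, mul_sum, ← sum_add_distrib]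
          exact sum_congr rfl fun i _ => by ring
      _ ≤ ∑ i, exp (-y) * exp (-H i) * (exp (δ * A i) + exp (-(δ * A i))) :=
          sum_le_sum fun i _ => mul_le_mul_of_nonneg_left (two_add_sq_le_exp_add_exp_neg _)
            (by positivity)
      _ = ∑ i, exp (-H i + δ * A i - y) + ∑ i, exp (-H i + -δ * A i - (-δ) ^ 2 / 2 * C) := by
          rw [← sum_add_distrib]
          refine sum_congr rfl fun i _ => ?_
          simp only [y, neg_sq, sub_eq_add_neg, exp_add]
          ring_nf
      _ ≤ 2 * Z := by linarith [hGD δ, hGD (-δ)]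
  have hZ : 0 ≤ Z := sum_nonneg fun i _ => (exp_pos _).le
  have hmain : δ ^ 2 * ∑ i, A i ^ 2 * exp (-H i) ≤ δ ^ 2 * (C * Z * exp y) := by
    have h := mul_le_mul_of_nonneg_left hsym (exp_pos y).le
    rw [← mul_assoc, ← exp_add, add_neg_cancel, exp_zero, one_mul] at h
    have hexp := mul_le_mul_of_nonneg_left (exp_le_one_add_mul_exp y) hZ
    have hy : 2 * (Z * (y * exp y)) = δ ^ 2 * (C * Z * exp y) := by ring
    linarith
  exact le_of_mul_le_mul_left hmain (by positivity)

theorem sum_sq_mul_exp_le_of_forall_sum_exp_le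
    (hGD : ∀ δ : ℝ, ∑ i, exp (-H i + δ * A i - δ ^ 2 / 2 * C) ≤ ∑ i, exp (-H i)) :
    ∑ i, A i ^ 2 * exp (-H i) ≤ C * ∑ i, exp (-H i) := by
  have hlim : Tendsto (fun δ : ℝ => C * (∑ i, exp (-H i)) * exp (δ ^ 2 / 2 * C)) (𝓝[≠] 0)
      (𝓝 (C * ∑ i, exp (-H i))) := by
    have : Continuous fun δ : ℝ => C * (∑ i, exp (-H i)) * exp (δ ^ 2 / 2 * C) := by fun_prop
    simpa using (this.tendsto 0).mono_left nhdsWithin_le_nhds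
  exact ge_of_tendsto hlim (eventually_nhdsWithin_of_forall fun δ hδ =>
    sum_sq_mul_exp_le_mul_exp_of_forall_sum_exp_le H A C hGD hδ)

end GaussianDomination

theorem Function.Periodic.sum_Ico_comp_sub {M : Type*} [AddCommMonoid M] {f : ℤ → M} {n : ℤ}
    (hf : Periodic f n) (hn : 0 < n) (a j : ℤ) :
    ∑ k ∈ Ico a (a + n), f (j - k) = ∑ k ∈ Ico a (a + n), f k := by
  have hinv : ∀ k ∈ Ico a (a + n), toIcoMod hn a (j - toIcoMod hn a (j - k)) = k := by
    intro k hk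
    refine (toIcoMod_eq_iff hn).mpr ⟨by simpa using hk, toIcoDiv hn a (j - k), ?_⟩
    rw [← self_sub_toIcoDiv_zsmul]
    abel
  refine sum_nbij' (fun k => toIcoMod hn a (j - k)) (fun k => toIcoMod hn a (j - k))
    (fun k _ => by simpa using toIcoMod_mem_Ico hn a (j - k))
    (fun k _ => by simpa using toIcoMod_mem_Ico hn a (j - k)) hinv hinv fun k _ => ?_
  rw [← self_sub_toIcoDiv_zsmul, hf.sub_zsmul_eq]

section DirichletForm

variable {ι : Type*} [Fintype ι]

def dirichletForm (K : ι → ι → ℝ) (x y : ι → ℝ) : ℝ :=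
  ∑ j, ∑ k, K j k * ((x j - x k) * (y j - y k))

theorem dirichletForm_eq_two_mul_sum {K : ι → ι → ℝ} (hK : ∀ j k, K j k = K k j) (x y : ι → ℝ) :
    dirichletForm K x y = 2 * ∑ j, x j * ∑ k, K j k * (y j - y k) := by
  have hswap : ∑ j, ∑ k, x k * (K j k * (y j - y k)) = -∑ j, x j * ∑ k, K j k * (y j - y k) := by
    rw [sum_comm, ← sum_neg_distrib]
    refine sum_congr rfl fun j _ => ?_
    rw [mul_sum, ← sum_neg_distrib]
    exact sum_congr rfl fun k _ => by rw [hK]; ring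
  have hsplit : dirichletForm K x y
      = ∑ j, x j * ∑ k, K j k * (y j - y k) - ∑ j, ∑ k, x k * (K j k * (y j - y k)) := by
    simp only [dirichletForm, mul_sum, ← sum_sub_distrib]
    exact sum_congr rfl fun j _ => sum_congr rfl fun k _ => by ring
  rw [hsplit, hswap]
  ring

end DirichletForm

section Coupling

variable (α γ ε : ℝ) (m : ℕ)

theorem Kc_sub_zero (j k : ℤ) : Kc α γ ε m (j - k) 0 = Kc α γ ε m j k := by
  simp [Kc, Nc, Jc]

theorem Kc_neg_zero (d : ℤ) : Kc α γ ε m (-d) 0 = Kc α γ ε m d 0 := by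
  have hN : Nc m (-d) 0 = Nc m d 0 := by
    simp only [Nc, sub_zero, ← dvd_neg (b := -d - 1), ← dvd_neg (b := -d + 1)]
    ring_nf
    simp only [or_comm]
  have hJ : Jc α m (-d) 0 = Jc α m d 0 := by
    simp only [Jc, Int.cast_neg, Int.cast_zero, sub_zero, dvd_neg]
    congr 1
    rw [← (Equiv.neg ℤ).tsum_eq]
    congr 1 with n
    rw [← abs_neg]
    simp only [Equiv.neg_apply, Int.cast_neg]
    ring_nf
  simp only [Kc, hN, hJ]

theorem Kc_comm (j k : ℤ) : Kc α γ ε m j k = Kc α γ ε m k j := by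
  rw [← Kc_sub_zero, ← Kc_neg_zero, neg_sub, Kc_sub_zero]

theorem Kc_periodic : Periodic (fun d : ℤ => Kc α γ ε m d 0) (2 * m) := by
  intro d
  have hN : Nc m (d + 2 * m) 0 = Nc m d 0 := by
    simp only [Nc, sub_zero, add_sub_right_comm _ (2 * (m : ℤ)), add_right_comm _ (2 * (m : ℤ)),
      dvd_add_self_right]
  have hJ : Jc α m (d + 2 * m) 0 = Jc α m d 0 := by
    simp only [Jc, sub_zero, dvd_add_self_right, Int.cast_add, Int.cast_mul, Int.cast_ofNat,
      Int.cast_natCast, Int.cast_zero]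
    congr 1
    conv_rhs => rw [← (Equiv.addRight (1 : ℤ)).tsum_eq]
    congr 1 with n
    simp only [Equiv.coe_addRight, Int.cast_add, Int.cast_one]
    ring_nf
  simp only [Kc, hN, hJ]

theorem Nc_nonneg (j k : ℤ) : 0 ≤ Nc m j k := by
  unfold Nc; split_ifs <;> norm_num

theorem Jc_nonneg (j k : ℤ) : 0 ≤ Jc α m j k := by
  unfold Jc; split_ifs
  exacts [le_rfl, tsum_nonneg fun n => rpow_nonneg (abs_nonneg _) _]

variable {α γ ε m}

theorem Kc_nonneg (hε : 0 ≤ ε) (hγε : ε ≤ γ) (j k : ℤ) : 0 ≤ Kc α γ ε m j k := by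
  have := mul_nonneg (sub_nonneg.mpr hγε) (Nc_nonneg m j k)
  have := mul_nonneg hε (Jc_nonneg α m j k)
  unfold Kc; linarith

theorem one_le_Jc_one_zero (hα : 1 < α) (hm : 1 ≤ m) : 1 ≤ Jc α m 1 0 := by
  have hndvd : ¬ (2 * (m : ℤ)) ∣ 1 - 0 := fun h => by
    have := Int.le_of_dvd one_pos h; omega
  have hinj : Injective fun n : ℤ => 1 + 2 * (m : ℤ) * n := fun a b hab => by
    simp only [add_right_inj, mul_right_inj' (by omega : 2 * (m : ℤ) ≠ 0)] at hab
    exact hab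
  have hsum : Summable fun n : ℤ => |((1 : ℤ) : ℝ) - ((0 : ℤ) : ℝ) + 2 * m * n| ^ (-α) :=
    ((summable_abs_int_rpow hα).comp_injective hinj).congr fun n => by simp
  rw [Jc, if_neg hndvd]
  simpa using hsum.le_tsum 0 fun n _ => rpow_nonneg (abs_nonneg _) _

theorem le_Kc_one_zero (hα : 1 < α) (hε : 0 ≤ ε) (hγε : ε ≤ γ) (hm : 1 ≤ m) :
    ε ≤ Kc α γ ε m 1 0 := by
  have := mul_nonneg (sub_nonneg.mpr hγε) (Nc_nonneg m 1 0)
  have := mul_le_mul_of_nonneg_left (one_le_Jc_one_zero hα hm) hε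
  unfold Kc; linarith

end Coupling

theorem Site.sum_comp_sub {M : Type*} [AddCommMonoid M] {m : ℕ} (hm : 1 ≤ m) {g : ℤ → M}
    (hg : Periodic g (2 * m)) (j : ℤ) : ∑ k : Site m, g (j - k) = ∑ k : Site m, g k := by
  have hIcc : Icc (1 - (m : ℤ)) m = Ico (1 - (m : ℤ)) (1 - m + 2 * m) := by
    ext; simp only [mem_Icc, mem_Ico]; omega
  rw [sum_coe_sort (Icc (1 - (m : ℤ)) m) (fun k => g (j - k)),
    sum_coe_sort (Icc (1 - (m : ℤ)) m) g, hIcc]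
  exact hg.sum_Ico_comp_sub (by omega) _ _

theorem Site.card (m : ℕ) : Fintype.card (Site m) = 2 * m := by
  rw [Fintype.card_coe, Int.card_Icc]; omega

theorem Ep_pos {α γ ε : ℝ} (hα : 1 < α) (hε : 0 < ε) (hγε : ε ≤ γ) {m : ℕ} (hm : 1 ≤ m) {p : ℝ}
    (hp₀ : 0 < p) (hp : p < 2 * π) : 0 < Ep α γ ε m p := by
  have hK := hε.trans_le (le_Kc_one_zero hα hε.le hγε hm)
  have hcos : cos p < 1 := lt_of_le_of_ne (cos_le_one p) fun h =>
    hp₀.ne' (by simpa using (cos_eq_one_iff_of_lt_of_lt (by linarith [pi_pos]) hp).mp h)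
  let one : Site m := ⟨1, by simp; omega⟩
  have hterm : 0 < Kc α γ ε m one 0 * (1 - cos (p * (one : ℤ))) := by
    simpa [one] using mul_pos hK (sub_pos.mpr hcos)
  unfold Ep
  refine mul_pos one_half_pos (sum_pos' (fun j _ => mul_nonneg (Kc_nonneg hε.le hγε _ _) ?_)
    ⟨one, mem_univ _, hterm⟩)
  linarith [cos_le_one (p * ((j : ℤ) : ℝ))]

theorem Function.Periodic.comp_mul_intCast {f : ℝ → ℝ} (hf : Periodic f (2 * π)) {p : ℝ} {m : ℕ}
    {n : ℤ} (hp : p * (2 * m) = n * (2 * π)) : Periodic (fun x : ℤ => f (p * x)) (2 * m) := by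
  intro x
  simp only [Int.cast_add, Int.cast_mul, Int.cast_ofNat, Int.cast_natCast, mul_add, hp]
  exact hf.int_mul n _

section SpinWave

variable {α γ ε : ℝ} {m : ℕ} {p : ℝ} {n : ℤ}

theorem sum_Kc_sub_mul_comp (α γ ε : ℝ) (hm : 1 ≤ m) (hp : p * (2 * m) = n * (2 * π)) {g : ℝ → ℝ}
    (hg : Periodic g (2 * π)) (j : ℤ) :
    ∑ k : Site m, Kc α γ ε m (j - k) 0 * g (p * ((j - k : ℤ) : ℝ))
      = ∑ d : Site m, Kc α γ ε m d 0 * g (p * (d : ℤ)) :=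
  Site.sum_comp_sub hm ((Kc_periodic α γ ε m).mul (hg.comp_mul_intCast hp)) j

theorem sum_Kc_mul_sin_eq_zero (hm : 1 ≤ m) (hp : p * (2 * m) = n * (2 * π)) :
    ∑ d : Site m, Kc α γ ε m d 0 * sin (p * (d : ℤ)) = 0 := by
  have h := sum_Kc_sub_mul_comp α γ ε hm hp sin_periodic 0
  simp only [zero_sub, Kc_neg_zero, Int.cast_neg, mul_neg, sin_neg, sum_neg_distrib] at h
  linarith

theorem sum_Kc_mul_sub_cos (hm : 1 ≤ m) (hp : p * (2 * m) = n * (2 * π)) (θ : ℝ) (j : ℤ) :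
    ∑ k : Site m, Kc α γ ε m j k * (cos (p * j + θ) - cos (p * (k : ℤ) + θ))
      = 2 * Ep α γ ε m p * cos (p * j + θ) := by
  have hcos := sum_Kc_sub_mul_comp α γ ε hm hp
    (g := fun x => 1 - cos x) (fun x => by simp) j
  beta_reduce at hcos
  have hsin := sum_Kc_sub_mul_comp α γ ε hm hp sin_periodic j
  have hrot : ∀ k : ℤ, cos (p * k + θ) = cos (p * j + θ) * cos (p * ((j - k : ℤ) : ℝ))
      + sin (p * j + θ) * sin (p * ((j - k : ℤ) : ℝ)) := by
    intro k
    rw [← cos_sub]; congr 1; push_cast; ring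
  calc ∑ k : Site m, Kc α γ ε m j k * (cos (p * j + θ) - cos (p * (k : ℤ) + θ))
      = cos (p * j + θ) * ∑ k : Site m, Kc α γ ε m (j - k) 0 * (1 - cos (p * ((j - k : ℤ) : ℝ)))
        - sin (p * j + θ) * ∑ k : Site m, Kc α γ ε m (j - k) 0 * sin (p * ((j - k : ℤ) : ℝ)) := by
        rw [mul_sum, mul_sum, ← sum_sub_distrib]
        refine sum_congr rfl fun k _ => ?_
        rw [Kc_sub_zero, hrot k]
        ring
    _ = 2 * Ep α γ ε m p * cos (p * j + θ) := by
        rw [hcos, hsin, sum_Kc_mul_sin_eq_zero hm hp, Ep]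
        ring

end SpinWave

noncomputable def siteCoupling (α γ ε : ℝ) (m : ℕ) (j k : Site m) : ℝ := Kc α γ ε m j k

section Gibbs

variable {α γ ε : ℝ} {m : ℕ}

theorem sum_exp_neg_Hc_pos : 0 < ∑ σ : Spin m, exp (-Hc α γ ε m σ) := by
  have : Nonempty ({-1, 1} : Finset ℝ) := ⟨⟨1, by simp⟩⟩
  exact sum_pos (fun _ _ => exp_pos _) univ_nonempty

theorem dirichletForm_siteCoupling_cos (hm : 1 ≤ m) {p : ℝ} {n : ℤ}
    (hp : p * (2 * m) = n * (2 * π)) (θ : ℝ) (x : Site m → ℝ) :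
    dirichletForm (siteCoupling α γ ε m) x (fun j => cos (p * (j : ℤ) + θ))
      = 4 * Ep α γ ε m p * ∑ j, x j * cos (p * (j : ℤ) + θ) := by
  rw [dirichletForm_eq_two_mul_sum (K := siteCoupling α γ ε m) fun j k => Kc_comm α γ ε m j k,
    mul_sum, mul_sum]
  refine sum_congr rfl fun j _ => ?_
  simp only [siteCoupling, sum_Kc_mul_sub_cos hm hp]
  ring

theorem Zf_mul (v : ℤ → ℝ) (δ : ℝ) :
    Zf α γ ε m (fun x => δ * v x)
      = ∑ σ : Spin m, exp (-Hc α γ ε m σ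
          + δ * dirichletForm (siteCoupling α γ ε m) (fun j => σ j) (fun j => v j)
          - δ ^ 2 / 2 * dirichletForm (siteCoupling α γ ε m) (fun j => v j) (fun j => v j)) := by
  refine sum_congr rfl fun σ _ => congr_arg exp ?_
  simp only [Hc, dirichletForm, siteCoupling, mul_sum, ← sum_neg_distrib, ← sum_sub_distrib,
    ← sum_add_distrib]
  exact sum_congr rfl fun j _ => sum_congr rfl fun k _ => by ring

theorem Zf_zero : Zf α γ ε m (fun _ => 0) = ∑ σ : Spin m, exp (-Hc α γ ε m σ) := by
  simpa using Zf_mul (α := α) (γ := γ) (ε := ε) (m := m) 0 0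

end Gibbs

theorem sq_sum_mul_cos_add_sq_sum_mul_sin {ι : Type*} [Fintype ι] (x t : ι → ℝ) :
    (∑ j, x j * cos (t j)) ^ 2 + (∑ j, x j * sin (t j)) ^ 2
      = ∑ j, ∑ k, x j * x k * cos (t j - t k) := by
  simp only [sq, sum_mul_sum, ← sum_add_distrib, cos_sub]
  exact sum_congr rfl fun j _ => sum_congr rfl fun k _ => by ring

section InfraredBound

variable {α γ ε : ℝ} {m : ℕ} {p : ℝ} {n : ℤ}

theorem sum_sq_spinWave_mul_exp_le (hm : 1 ≤ m)
    (hGD : ∀ h : ℤ → ℝ, Zf α γ ε m h ≤ Zf α γ ε m (fun _ => 0))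
    (hp : p * (2 * m) = n * (2 * π)) (θ : ℝ) :
    ∑ σ : Spin m, (4 * Ep α γ ε m p * ∑ j, (σ j : ℝ) * cos (p * (j : ℤ) + θ)) ^ 2
        * exp (-Hc α γ ε m σ)
      ≤ 4 * Ep α γ ε m p * (∑ j : Site m, cos (p * (j : ℤ) + θ) ^ 2)
        * ∑ σ : Spin m, exp (-Hc α γ ε m σ) := by
  have h := sum_sq_mul_exp_le_of_forall_sum_exp_le (Hc α γ ε m)
    (fun σ => dirichletForm (siteCoupling α γ ε m) (fun j => σ j) fun j => cos (p * (j : ℤ) + θ))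
    (dirichletForm (siteCoupling α γ ε m) (fun j => cos (p * (j : ℤ) + θ))
      fun j => cos (p * (j : ℤ) + θ))
    fun δ => by
      have h := hGD fun x => δ * cos (p * x + θ)
      rwa [Zf_mul (fun x : ℤ => cos (p * x + θ)) δ, Zf_zero] at h
  simpa only [dirichletForm_siteCoupling_cos hm hp, ← sq] using h

theorem two_mul_mul_gm_mul_sum_exp (hm : m ≠ 0) (p : ℝ) :
    2 * m * gm α γ ε m p * ∑ σ : Spin m, exp (-Hc α γ ε m σ)
      = ∑ σ : Spin m, ((∑ j, (σ j : ℝ) * cos (p * (j : ℤ))) ^ 2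
          + (∑ j, (σ j : ℝ) * sin (p * (j : ℤ))) ^ 2) * exp (-Hc α γ ε m σ) := by
  have hZ := (sum_exp_neg_Hc_pos (α := α) (γ := γ) (ε := ε) (m := m)).ne'
  calc 2 * m * gm α γ ε m p * ∑ σ : Spin m, exp (-Hc α γ ε m σ)
      = ∑ j : Site m, ∑ k : Site m, cos (p * (((j : ℤ) - (k : ℤ) : ℤ) : ℝ))
          * (corr α γ ε m j k * ∑ σ : Spin m, exp (-Hc α γ ε m σ)) := by
        rw [gm, ← mul_assoc, mul_one_div_cancel (by positivity), one_mul, sum_mul]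
        simp only [sum_mul, mul_assoc]
    _ = ∑ j : Site m, ∑ k : Site m, ∑ σ : Spin m,
          (σ j : ℝ) * σ k * cos (p * (j : ℤ) - p * (k : ℤ)) * exp (-Hc α γ ε m σ) := by
        simp only [corr, div_mul_cancel₀ _ hZ, mul_sum]
        refine sum_congr rfl fun j _ => sum_congr rfl fun k _ => sum_congr rfl fun σ _ => ?_
        push_cast; ring_nf
    _ = ∑ σ : Spin m, ((∑ j, (σ j : ℝ) * cos (p * (j : ℤ))) ^ 2
          + (∑ j, (σ j : ℝ) * sin (p * (j : ℤ))) ^ 2) * exp (-Hc α γ ε m σ) := by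
        simp only [sq_sum_mul_cos_add_sq_sum_mul_sin, sum_mul]
        conv_rhs => rw [sum_comm]
        exact sum_congr rfl fun j _ => sum_comm

theorem gm_le_one_div_four_mul_Ep (hm : 1 ≤ m)
    (hGD : ∀ h : ℤ → ℝ, Zf α γ ε m h ≤ Zf α γ ε m (fun _ => 0))
    (hp : p * (2 * m) = n * (2 * π)) (hE : 0 < Ep α γ ε m p) :
    gm α γ ε m p ≤ 1 / (4 * Ep α γ ε m p) := by
  set E := Ep α γ ε m p
  set Z := ∑ σ : Spin m, exp (-Hc α γ ε m σ)
  have hZ : 0 < Z := sum_exp_neg_Hc_pos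
  have hcos := sum_sq_spinWave_mul_exp_le hm hGD hp 0
  have hsin := sum_sq_spinWave_mul_exp_le hm hGD hp (-(π / 2))
  simp only [add_zero, ← sub_eq_add_neg, cos_sub_pi_div_two] at hcos hsin
  have hnorm :
      ∑ j : Site m, cos (p * (j : ℤ)) ^ 2 + ∑ j : Site m, sin (p * (j : ℤ)) ^ 2 = 2 * m := by
    rw [← sum_add_distrib]
    simp only [cos_sq_add_sin_sq, sum_const, card_univ, Site.card, nsmul_eq_mul, mul_one]
    push_cast; ring
  have hbound : 16 * E ^ 2 * (2 * m * gm α γ ε m p * Z) ≤ 8 * m * E * Z := by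
    calc 16 * E ^ 2 * (2 * m * gm α γ ε m p * Z)
        = ∑ σ : Spin m, (4 * E * ∑ j, (σ j : ℝ) * cos (p * (j : ℤ))) ^ 2 * exp (-Hc α γ ε m σ)
          + ∑ σ : Spin m, (4 * E * ∑ j, (σ j : ℝ) * sin (p * (j : ℤ))) ^ 2
            * exp (-Hc α γ ε m σ) := by
          rw [two_mul_mul_gm_mul_sum_exp (by omega), mul_sum, ← sum_add_distrib]
          exact sum_congr rfl fun σ _ => by ring
      _ ≤ 4 * E * (∑ j : Site m, cos (p * (j : ℤ)) ^ 2 + ∑ j : Site m, sin (p * (j : ℤ)) ^ 2)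
          * Z := by linarith
      _ = 8 * m * E * Z := by rw [hnorm]; ring
  rw [le_div_iff₀ (by positivity)]
  refine le_of_mul_le_mul_left ?_ (by positivity : 0 < 8 * m * E * Z)
  linear_combination hbound

end InfraredBound

theorem infrared_bound_general (α γ ε : ℝ) (hα1 : 1 < α)
    (hε : 0 < ε) (hγε : ε ≤ γ) (m : ℕ) (hm : 1 ≤ m)
    (hGD : ∀ h : ℤ → ℝ, Zf α γ ε m h ≤ Zf α γ ε m (fun _ => 0)) :
    ∀ k : ℕ, k < 2 * m → k ≠ 0 →
      gm α γ ε m ((k : ℝ) * Real.pi / (m : ℝ)) ≤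
        1 / (2 * Ep α γ ε m ((k : ℝ) * Real.pi / (m : ℝ))) := by
  intro k hk hk0
  have hm' : (0 : ℝ) < m := by exact_mod_cast hm
  have hp : (k : ℝ) * π / m * (2 * m) = (k : ℤ) * (2 * π) := by
    push_cast; field_simp
  have hp₀ : 0 < (k : ℝ) * π / m := by positivity
  have hp₂ : (k : ℝ) * π / m < 2 * π := by
    rw [div_lt_iff₀ hm']
    have := mul_lt_mul_of_pos_right (by exact_mod_cast hk : (k : ℝ) < 2 * m) pi_pos
    linarith
  have hE := Ep_pos hα1 hε hγε hm hp₀ hp₂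
  calc _ ≤ 1 / (4 * Ep α γ ε m _) := gm_le_one_div_four_mul_Ep hm hGD hp hE
    _ ≤ _ := one_div_le_one_div_of_le (by positivity) (by linarith)

/-- The infrared bound: if Gaussian domination `Z(h) ≤ Z(0)` holds, then for
every nonzero `p = kπ/m ∈ Λ*` one has `g_m(p) ≤ 1/(2E(p))`. -/
theorem infrared_bound (α γ ε : ℝ) (hα1 : 1 < α) (hα2 : α < 2)
    (hε : 0 < ε) (hγε : ε ≤ γ) (m : ℕ) (hm : 1 ≤ m)
    (hGD : ∀ h : ℤ → ℝ, Zf α γ ε m h ≤ Zf α γ ε m (fun _ => 0)) :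
    ∀ k : ℕ, k < 2 * m → k ≠ 0 →
      gm α γ ε m ((k : ℝ) * Real.pi / (m : ℝ)) ≤
        1 / (2 * Ep α γ ε m ((k : ℝ) * Real.pi / (m : ℝ))) :=
  infrared_bound_general α γ ε hα1 hε hγε m hm hGD
end
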